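/- The reduced density matrix eigenvalues of the boosted equal-helicity state: the 2×2 spin reduced density matrix of the pure state with amplitudes (cos η cos(δ/2), -cos η sin(δ/2), -sin η sin(δ/2), sin η cos(δ/2)) in the basis {|p₊↑⟩,|p₊↓⟩,|p₋↑⟩,|p₋↓⟩} has eigenvalues (1 ± sqrt(cos²(2η) + sin²δ·sin²(2η)))/2. -/
import Mathlib


open Real Matrix

/-- Amplitudes of the boosted equal-helicity state: first index = momentum,
second index = spin, in the basis |p₊↑⟩, |p₊↓⟩, |p₋↑⟩, |p₋↓⟩. -/
noncomputable def psiAmp (η δ : ℝ) : Matrix (Fin 2) (Fin 2) ℂ :=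
  !![(Real.cos η * Real.cos (δ/2) : ℝ), (-(Real.cos η * Real.sin (δ/2)) : ℝ);
     (-(Real.sin η * Real.sin (δ/2)) : ℝ), (Real.sin η * Real.cos (δ/2) : ℝ)]

/-- The reduced (spin) density matrix: partial trace over the momentum factor. -/
noncomputable def rhoSpin (η δ : ℝ) : Matrix (Fin 2) (Fin 2) ℂ :=
  fun s s' => ∑ p : Fin 2, psiAmp η δ p s * (starRingEnd ℂ) (psiAmp η δ p s')

lemma rhoSpin_eq (η δ : ℝ) : rhoSpin η δ =
    !![((Real.cos η)^2*(Real.cos (δ/2))^2 + (Real.sin η)^2*(Real.sin (δ/2))^2 : ℂ),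
       (-(Real.sin (δ/2)*Real.cos (δ/2)) : ℂ);
       (-(Real.sin (δ/2)*Real.cos (δ/2)) : ℂ),
       ((Real.cos η)^2*(Real.sin (δ/2))^2 + (Real.sin η)^2*(Real.cos (δ/2))^2 : ℂ)] := by
  have h1 : (Real.sin η : ℂ)^2 + (Real.cos η : ℂ)^2 = 1 := by
    have := Real.sin_sq_add_cos_sq η
    exact_mod_cast congrArg Complex.ofReal this
  ext i j
  fin_cases i <;> fin_cases j <;>
    simp [rhoSpin, psiAmp, Fin.sum_univ_two, Complex.conj_ofReal,
      -Complex.ofReal_cos, -Complex.ofReal_sin] <;>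
    first
      | ring1
      | linear_combination (-((Real.sin (δ/2):ℂ) * (Real.cos (δ/2):ℂ))) * h1

lemma det_zero (η δ : ℝ) (μ : ℝ)
    (h : (μ:ℂ)^2 - μ + (1 - ((Real.cos (2*η):ℂ)^2 + (Real.sin δ:ℂ)^2 * (Real.sin (2*η):ℂ)^2))/4 = 0) :
    (rhoSpin η δ - (μ:ℂ) • 1).det = 0 := by
  have h1 : (Real.sin η : ℂ)^2 + (Real.cos η : ℂ)^2 = 1 := by
    have := Real.sin_sq_add_cos_sq η; exact_mod_cast congrArg Complex.ofReal this
  have h2 : (Real.sin (δ/2) : ℂ)^2 + (Real.cos (δ/2) : ℂ)^2 = 1 := by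
    have := Real.sin_sq_add_cos_sq (δ/2); exact_mod_cast congrArg Complex.ofReal this
  have h3 : (Real.cos (2*η) : ℂ) = 2 * (Real.cos η : ℂ)^2 - 1 := by
    have := Real.cos_two_mul η; exact_mod_cast congrArg Complex.ofReal this
  have h4 : (Real.sin (2*η) : ℂ) = 2 * (Real.sin η : ℂ) * (Real.cos η : ℂ) := by
    have := Real.sin_two_mul η; exact_mod_cast congrArg Complex.ofReal this
  have h5 : (Real.sin δ : ℂ) = 2 * (Real.sin (δ/2) : ℂ) * (Real.cos (δ/2) : ℂ) := by
    have := Real.sin_two_mul (δ/2)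
    rw [show 2*(δ/2) = δ by ring] at this
    exact_mod_cast congrArg Complex.ofReal this
  rw [h3, h4, h5] at h
  have hmat : rhoSpin η δ - (μ:ℂ) • 1 =
      !![((Real.cos η:ℂ)^2*(Real.cos (δ/2):ℂ)^2 + (Real.sin η:ℂ)^2*(Real.sin (δ/2):ℂ)^2 - μ : ℂ),
         (-((Real.sin (δ/2):ℂ)*(Real.cos (δ/2):ℂ)) : ℂ);
         (-((Real.sin (δ/2):ℂ)*(Real.cos (δ/2):ℂ)) : ℂ),
         ((Real.cos η:ℂ)^2*(Real.sin (δ/2):ℂ)^2 + (Real.sin η:ℂ)^2*(Real.cos (δ/2):ℂ)^2 - μ : ℂ)] := by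
    rw [rhoSpin_eq]
    ext i j
    fin_cases i <;> fin_cases j <;>
      simp [Matrix.one_apply, -Complex.ofReal_cos, -Complex.ofReal_sin]
  rw [hmat, Matrix.det_fin_two_of]
  linear_combination h
    + (-(Real.sin (δ/2):ℂ)^2*(μ:ℂ) - (Real.cos (δ/2):ℂ)^2*(μ:ℂ)
       + (Real.cos (δ/2):ℂ)^2*(Real.sin (δ/2):ℂ)^2 - (Real.sin η:ℂ)^2
       + (Real.sin η:ℂ)^2*(Real.sin (δ/2):ℂ)^4
       + 3*(Real.sin η:ℂ)^2*(Real.cos (δ/2):ℂ)^2*(Real.sin (δ/2):ℂ)^2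
       + (Real.sin η:ℂ)^2*(Real.cos (δ/2):ℂ)^4 + (Real.cos η:ℂ)^2
       + (Real.cos η:ℂ)^2*(Real.cos (δ/2):ℂ)^2*(Real.sin (δ/2):ℂ)^2) * h1
    + (-(μ:ℂ) + (Real.sin η:ℂ)^2 + (Real.sin η:ℂ)^2*(Real.sin (δ/2):ℂ)^2
       + (Real.sin η:ℂ)^2*(Real.cos (δ/2):ℂ)^2 - (Real.sin η:ℂ)^4
       - (Real.sin η:ℂ)^4*(Real.sin (δ/2):ℂ)^2 - (Real.sin η:ℂ)^4*(Real.cos (δ/2):ℂ)^2) * h2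

lemma eig_of_det_zero (η δ : ℝ) (μ : ℂ)
    (hdet : (rhoSpin η δ - μ • 1).det = 0) :
    Module.End.HasEigenvalue (Matrix.toLin' (rhoSpin η δ)) μ := by
  obtain ⟨v, hv0, hv⟩ := (Matrix.exists_mulVec_eq_zero_iff).2 hdet
  refine Module.End.hasEigenvalue_of_hasEigenvector ⟨?_, hv0⟩
  rw [Module.End.mem_eigenspace_iff, Matrix.toLin'_apply]
  have := hv
  rw [Matrix.sub_mulVec, sub_eq_zero] at this
  rw [this, Matrix.smul_mulVec, Matrix.one_mulVec]

theorem stmt_16 (η δ : ℝ) :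
    Module.End.HasEigenvalue (Matrix.toLin' (rhoSpin η δ))
      (((1 + Real.sqrt (Real.cos (2*η)^2 + Real.sin δ ^2 * Real.sin (2*η)^2)) / 2 : ℝ) : ℂ) ∧
    Module.End.HasEigenvalue (Matrix.toLin' (rhoSpin η δ))
      (((1 - Real.sqrt (Real.cos (2*η)^2 + Real.sin δ ^2 * Real.sin (2*η)^2)) / 2 : ℝ) : ℂ) := by
  set D : ℝ := Real.cos (2*η)^2 + Real.sin δ ^2 * Real.sin (2*η)^2 with hD
  have hD0 : 0 ≤ D := by positivity
  have hs : Real.sqrt D ^ 2 = D := Real.sq_sqrt hD0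
  have key : ∀ μ : ℝ, μ^2 - μ + (1 - D)/4 = 0 →
      Module.End.HasEigenvalue (Matrix.toLin' (rhoSpin η δ)) (μ : ℂ) := by
    intro μ hμ
    apply eig_of_det_zero
    apply _root_.det_zero
    have : (μ:ℂ)^2 - μ + (1 - (D:ℝ))/4 = 0 := by exact_mod_cast congrArg Complex.ofReal hμ
    rw [hD] at this
    push_cast at this ⊢
    linear_combination this
  constructor
  · exact key _ (by nlinarith [hs])
  · exact key _ (by nlinarith [hs])
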